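/- Let V be a ℤ/2-vector space with a fixed basis, A = T(V) the tensor algebra, ∂ : A → A a derivation with ∂² = 0 and ∂(1) = 0, and let ε₁, ε₂ : A → ℤ/2 be augmentations (unital algebra maps annihilating the image of ∂). Define the linear map L : T(V) → V by L(1) = 0 and L(v₁ ⊗ ⋯ ⊗ v_m) = Σ_{i=1}^m ε₁(v₁)⋯ε₁(v_{i-1}) ε₂(v_{i+1})⋯ε₂(v_m) · v_i on basis words, and set ∂₁^{ε₁,ε₂} := L ∘ ∂|_V : V → V. Then (∂₁^{ε₁,ε₂})² = 0. -/

import Mathlib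

/-!
The word formula says that `L` is a derivation `T(V) → V` for the bimodule structure on `V` in
which `T(V)` acts through `ε₁` on the left and through `ε₂` on the right, and that `L ∘ ι = id`.
Hence both `L ∘ ∂` (the augmentations kill the image of `∂`) and `∂₁ ∘ L = (L ∘ ∂ ∘ ι) ∘ L` are
such derivations, and they agree on `V`. A derivation on a tensor algebra is determined by its
values on `V`, so `L ∘ ∂ = ∂₁ ∘ L`, and `∂₁ ∘ ∂₁ = ∂₁ ∘ L ∘ ∂ ∘ ι = L ∘ ∂ ∘ ∂ ∘ ι = 0`.
-/

open TensorAlgebra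

theorem Module.Basis.tensorAlgebra_apply {κ R M : Type*} [CommSemiring R] [AddCommMonoid M]
    [Module R M] (b : Module.Basis κ R M) (w : FreeMonoid κ) :
    b.tensorAlgebra w = (w.toList.map fun j => ι R (b j)).prod := by
  simp [Module.Basis.tensorAlgebra, FreeAlgebra.basisFreeMonoid,
    FreeAlgebra.equivMonoidAlgebraFreeMonoid, FreeMonoid.lift_apply, map_list_prod,
    Function.comp_def]

section TwistedDerivation

variable {R A M N : Type*} [CommRing R] [Ring A] [Algebra R A]
  [AddCommGroup M] [Module R M] [AddCommGroup N] [Module R N]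

/-- A derivation with values in `M`, viewed as an `A`-bimodule through `ε₁` on the left and `ε₂`
on the right. -/
def IsTwistedDerivation (ε₁ ε₂ : A →ₐ[R] R) (f : A →ₗ[R] M) : Prop :=
  ∀ x y, f (x * y) = ε₁ x • f y + ε₂ y • f x

namespace IsTwistedDerivation

variable {ε₁ ε₂ : A →ₐ[R] R} {f : A →ₗ[R] M}

theorem map_one (hf : IsTwistedDerivation ε₁ ε₂ f) : f 1 = 0 := by
  simpa using hf 1 1

theorem comp_left (hf : IsTwistedDerivation ε₁ ε₂ f) (g : M →ₗ[R] N) :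
    IsTwistedDerivation ε₁ ε₂ (g ∘ₗ f) := fun x y => by
  simp [hf x y]

theorem comp_right (hf : IsTwistedDerivation ε₁ ε₂ f) {D : A →ₗ[R] A}
    (hD : ∀ x y, D (x * y) = D x * y + x * D y)
    (hε₁ : ∀ x, ε₁ (D x) = 0) (hε₂ : ∀ x, ε₂ (D x) = 0) :
    IsTwistedDerivation ε₁ ε₂ (f ∘ₗ D) := fun x y => by
  simp only [LinearMap.comp_apply, hD, map_add, hf (D x), hf x, hε₁, hε₂, zero_smul, zero_add,
    add_zero]
  abel

variable {V : Type*} [AddCommGroup V] [Module R V]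

theorem ext_tensorAlgebra {ε₁ ε₂ : TensorAlgebra R V →ₐ[R] R} {f g : TensorAlgebra R V →ₗ[R] M}
    (hf : IsTwistedDerivation ε₁ ε₂ f) (hg : IsTwistedDerivation ε₁ ε₂ g)
    (h : f ∘ₗ ι R = g ∘ₗ ι R) : f = g := by
  ext x
  induction x using TensorAlgebra.induction with
  | algebraMap r => simp [Algebra.algebraMap_eq_smul_one, hf.map_one, hg.map_one]
  | ι v => exact LinearMap.congr_fun h v
  | mul x y hx hy => rw [hf, hg, hx, hy]
  | add x y hx hy => rw [map_add, map_add, hx, hy]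

end IsTwistedDerivation

end TwistedDerivation

section Bilinearization

variable {κ R V : Type*} [CommRing R] [AddCommGroup V] [Module R V]

def IsBilinearization (b : Module.Basis κ R V) (ε₁ ε₂ : TensorAlgebra R V →ₐ[R] R)
    (L : TensorAlgebra R V →ₗ[R] V) : Prop :=
  ∀ l : List κ, L (l.map fun j => ι R (b j)).prod =
    ∑ i : Fin l.length,
      (((l.take i.val).map fun j => ε₁ (ι R (b j))).prod *
        ((l.drop (i.val + 1)).map fun j => ε₂ (ι R (b j))).prod) • b (l.get i)

namespace IsBilinearization

variable {b : Module.Basis κ R V} {ε₁ ε₂ : TensorAlgebra R V →ₐ[R] R}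
  {L : TensorAlgebra R V →ₗ[R] V} (hL : IsBilinearization b ε₁ ε₂ L)
include hL

theorem map_one : L 1 = 0 := by
  simpa using hL []

theorem map_ι_basis (j : κ) : L (ι R (b j)) = b j := by
  simpa using hL [j]

theorem comp_ι : L ∘ₗ ι R = LinearMap.id :=
  b.ext fun j => hL.map_ι_basis j

theorem map_ι (v : V) : L (ι R v) = v :=
  LinearMap.congr_fun hL.comp_ι v

theorem map_ι_basis_mul_word (j : κ) (l : List κ) :
    L (ι R (b j) * (l.map fun k => ι R (b k)).prod) =
      ε₁ (ι R (b j)) • L (l.map fun k => ι R (b k)).prod +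
        ε₂ (l.map fun k => ι R (b k)).prod • b j := by
  erw [hL (j :: l), hL l, Fin.sum_univ_succ]
  simp only [Fin.val_zero, List.take_zero, List.map_nil, List.prod_nil, one_mul, Fin.val_succ,
    List.drop_succ_cons, List.drop_zero, List.take_succ_cons, List.map_cons, List.prod_cons,
    List.get_eq_getElem, List.getElem_cons_zero, List.getElem_cons_succ, Finset.smul_sum,
    smul_smul, mul_assoc, map_list_prod, List.map_map, Function.comp_def]
  exact add_comm _ _

theorem map_ι_basis_mul (j : κ) (y : TensorAlgebra R V) :
    L (ι R (b j) * y) = ε₁ (ι R (b j)) • L y + ε₂ y • b j := by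
  have h : L ∘ₗ LinearMap.mulLeft R (ι R (b j)) =
      ε₁ (ι R (b j)) • L + (ε₂ : TensorAlgebra R V →ₗ[R] R).smulRight (b j) :=
    b.tensorAlgebra.ext fun w => by
      simpa [b.tensorAlgebra_apply] using hL.map_ι_basis_mul_word j w.toList
  simpa using LinearMap.congr_fun h y

theorem map_ι_mul (v : V) (y : TensorAlgebra R V) :
    L (ι R v * y) = ε₁ (ι R v) • L y + ε₂ y • v := by
  have h : L ∘ₗ LinearMap.mulRight R y ∘ₗ ι R =
      (ε₁ : TensorAlgebra R V →ₗ[R] R).smulRight (L y) ∘ₗ ι R + ε₂ y • LinearMap.id :=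
    b.ext fun j => by simpa using hL.map_ι_basis_mul j y
  simpa using LinearMap.congr_fun h v

theorem isTwistedDerivation : IsTwistedDerivation ε₁ ε₂ L := by
  intro x y
  induction x using TensorAlgebra.induction generalizing y with
  | algebraMap r =>
    simp [Algebra.algebraMap_eq_smul_one, hL.map_one]
  | ι v => rw [hL.map_ι_mul, hL.map_ι]
  | mul x₁ x₂ h₁ h₂ =>
    rw [mul_assoc, h₁, h₂, h₁, map_mul, map_mul]
    module
  | add x₁ x₂ h₁ h₂ =>
    simp only [add_mul, map_add, h₁, h₂]
    module

theorem comp_derivation_eq {D : TensorAlgebra R V →ₗ[R] TensorAlgebra R V}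
    (hD : ∀ x y, D (x * y) = D x * y + x * D y)
    (hε₁ : ∀ x, ε₁ (D x) = 0) (hε₂ : ∀ x, ε₂ (D x) = 0) :
    L ∘ₗ D = (L ∘ₗ D ∘ₗ ι R) ∘ₗ L :=
  (hL.isTwistedDerivation.comp_right hD hε₁ hε₂).ext_tensorAlgebra
    (hL.isTwistedDerivation.comp_left _) <| LinearMap.ext fun v => by simp [hL.map_ι]

end IsBilinearization

end Bilinearization

theorem stmt4_general {ι V : Type*} [AddCommGroup V] [Module (ZMod 2) V]
    (b : Module.Basis ι (ZMod 2) V)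
    (D : TensorAlgebra (ZMod 2) V →ₗ[ZMod 2] TensorAlgebra (ZMod 2) V)
    (hLeib : ∀ x y, D (x * y) = D x * y + x * D y)
    (hsq : ∀ x, D (D x) = 0)
    (ε₁ ε₂ : TensorAlgebra (ZMod 2) V →ₐ[ZMod 2] ZMod 2)
    (hε₁ : ∀ x, ε₁ (D x) = 0) (hε₂ : ∀ x, ε₂ (D x) = 0)
    (L : TensorAlgebra (ZMod 2) V →ₗ[ZMod 2] V)
    (hL : ∀ l : List ι,
      L ((l.map fun j => TensorAlgebra.ι (ZMod 2) (b j))).prod =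
        ∑ i : Fin l.length,
          (((l.take i.val).map fun j => ε₁ (TensorAlgebra.ι (ZMod 2) (b j))).prod *
            ((l.drop (i.val + 1)).map fun j => ε₂ (TensorAlgebra.ι (ZMod 2) (b j))).prod)
            • b (l.get i)) :
    ∀ v : V, L (D (TensorAlgebra.ι (ZMod 2)
      (L (D (TensorAlgebra.ι (ZMod 2) v))))) = 0 := by
  have hLD := IsBilinearization.comp_derivation_eq (b := b) hL hLeib hε₁ hε₂
  intro v
  simpa [hsq] using (LinearMap.congr_fun hLD (D (TensorAlgebra.ι (ZMod 2) v))).symm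

/-- The bilinearized Legendrian-contact-homology differential `∂₁^{ε₁,ε₂} = L ∘ ∂|_V`
of Bourgeois–Chantraine squares to zero. -/
theorem stmt4 {ι V : Type*} [AddCommGroup V] [Module (ZMod 2) V]
    (b : Module.Basis ι (ZMod 2) V)
    (D : TensorAlgebra (ZMod 2) V →ₗ[ZMod 2] TensorAlgebra (ZMod 2) V)
    (hLeib : ∀ x y, D (x * y) = D x * y + x * D y)
    (hsq : ∀ x, D (D x) = 0)
    (hone : D 1 = 0)
    (ε₁ ε₂ : TensorAlgebra (ZMod 2) V →ₐ[ZMod 2] ZMod 2)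
    (hε₁ : ∀ x, ε₁ (D x) = 0) (hε₂ : ∀ x, ε₂ (D x) = 0)
    (L : TensorAlgebra (ZMod 2) V →ₗ[ZMod 2] V)
    (hL1 : L 1 = 0)
    (hL : ∀ l : List ι,
      L ((l.map fun j => TensorAlgebra.ι (ZMod 2) (b j))).prod =
        ∑ i : Fin l.length,
          (((l.take i.val).map fun j => ε₁ (TensorAlgebra.ι (ZMod 2) (b j))).prod *
            ((l.drop (i.val + 1)).map fun j => ε₂ (TensorAlgebra.ι (ZMod 2) (b j))).prod)
            • b (l.get i)) :
    ∀ v : V, L (D (TensorAlgebra.ι (ZMod 2)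
      (L (D (TensorAlgebra.ι (ZMod 2) v))))) = 0 :=
  stmt4_general b D hLeib hsq ε₁ ε₂ hε₁ hε₂ L hL
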